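/- arXiv:1306.0976 — 5 statements merged into one kernel-verified Lean document; each statement's English description precedes it below -/
import Mathlib

section
/- For every δ ∈ [0,1) there exists a constant C > 0 such that the following holds. Let Z₁ and Z₂ be independent standard normal random variables on a probability space, let ρ ∈ [−δ, δ], and set W₁ = Z₁ and W₂ = ρ Z₁ + √(1 − ρ²) Z₂. Then for all t ≥ 0: P( |W₁| ≥ t and |W₂| ≥ t ) ≤ C (1 + t)^{−2} exp( −t² / (1 + δ) ). -/
/-!
Write `w = ρ x + √(1 - ρ²) y` and `α = t / (1 + ρ)`. For all `x, y, t`,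
`(x² + y²) / 2 ≥ t² / (1 + ρ) + α (x - t) + α (w - t)`
(AM–GM in `t`, then Cauchy–Schwarz for `(1 + ρ) x + √(1 - ρ²) y`). Hence on the quadrant
`{x ≥ t, w ≥ t}` the standard Gaussian density of `(Z₁, Z₂)` is dominated by `exp (-t² / (1 + ρ))`
times two exponential densities of rate `α`, in `x` and in `w`; the substitution `y ↦ w` costs the
factor `1 / √(1 - ρ²)`, so the quadrant has mass at most
`(1 + ρ)² / (2π √(1 - ρ²) t²) · exp (-t² / (1 + ρ))`. Reflecting `Z₁` and `Z₂` maps the other three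
quadrants of `(W₁, W₂)` onto this one with `ρ` replaced by `± ρ`, and `1 / t² ≤ 4 / (1 + t)²` once
`t ≥ 1`; for `t ≤ 1` the trivial bound `1` suffices.
-/

open MeasureTheory ProbabilityTheory
open Real Set
open scoped ENNReal

lemma lintegral_comp_mul_add (f : ℝ → ℝ≥0∞) {c : ℝ} (hc : c ≠ 0) (b : ℝ) :
    ∫⁻ y, f (b + c * y) = ENNReal.ofReal |c⁻¹| * ∫⁻ w, f w := by
  calc ∫⁻ y, f (b + c * y)
      = ∫⁻ w, f (b + w) ∂(volume.map (c * ·)) :=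
        (lintegral_map_equiv (fun w => f (b + w))
          (Homeomorph.mulLeft₀ c hc).toMeasurableEquiv).symm
    _ = ENNReal.ofReal |c⁻¹| * ∫⁻ w, f (b + w) := by
        rw [Real.map_volume_mul_left hc, lintegral_smul_measure, smul_eq_mul]
    _ = ENNReal.ofReal |c⁻¹| * ∫⁻ w, f w := by rw [lintegral_add_left_eq_self]

lemma lintegral_Ici_exp_neg_mul_sub (a : ℝ) {β : ℝ} (hβ : 0 < β) :
    ∫⁻ y in Ici a, ENNReal.ofReal (exp (-(β * (y - a)))) = ENNReal.ofReal β⁻¹ := by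
  have hshift : (fun y => exp (-(β * (y - a)))) = fun y => exp (β * a) * exp (-β * y) := by
    funext y; rw [← exp_add]; ring_nf
  rw [setLIntegral_congr Ioi_ae_eq_Ici.symm, ← ofReal_integral_eq_lintegral_ofReal, hshift,
    integral_const_mul, integral_exp_mul_Ioi (by linarith), neg_div_neg_eq, mul_div_assoc',
    ← exp_add]
  · simp
  · rw [hshift]; exact (exp_neg_integrableOn_Ioi a hβ).const_mul _
  · exact Filter.Eventually.of_forall fun y => (exp_pos _).le

lemma exponent_le_half_sq_add_sq {ρ c : ℝ} (hρ : -1 < ρ) (hc : c ^ 2 = 1 - ρ ^ 2) (t x y : ℝ) :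
    t ^ 2 / (1 + ρ) + t / (1 + ρ) * (x - t) + t / (1 + ρ) * (ρ * x + c * y - t)
      ≤ (x ^ 2 + y ^ 2) / 2 := by
  have h1ρ : 0 < 1 + ρ := by linarith
  rw [← sub_nonneg]
  have key : (x ^ 2 + y ^ 2) / 2 - (t ^ 2 / (1 + ρ) + t / (1 + ρ) * (x - t)
      + t / (1 + ρ) * (ρ * x + c * y - t))
      = ((x + ρ * x + c * y - 2 * t) ^ 2 + (c * x - (1 + ρ) * y) ^ 2) / (4 * (1 + ρ)) := by
    field_simp
    linear_combination (-2 * (x ^ 2 + y ^ 2)) * hc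
  rw [key]; positivity

lemma gaussianPDF_mul_gaussianPDF_le {ρ c : ℝ} (hρ : -1 < ρ) (hc : c ^ 2 = 1 - ρ ^ 2)
    (t x y : ℝ) :
    gaussianPDF 0 1 x * gaussianPDF 0 1 y
      ≤ ENNReal.ofReal ((2 * π)⁻¹ * exp (-t ^ 2 / (1 + ρ)))
        * (ENNReal.ofReal (exp (-(t / (1 + ρ) * (x - t))))
          * ENNReal.ofReal (exp (-(t / (1 + ρ) * (ρ * x + c * y - t))))) := by
  have hpdf : gaussianPDFReal 0 1 x * gaussianPDFReal 0 1 y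
      = (2 * π)⁻¹ * exp (-((x ^ 2 + y ^ 2) / 2)) := by
    simp only [gaussianPDFReal, NNReal.coe_one, mul_one, sub_zero]
    rw [mul_mul_mul_comm, ← mul_inv, ← sqrt_mul (by positivity), sqrt_mul_self (by positivity),
      ← exp_add]
    ring_nf
  rw [gaussianPDF, gaussianPDF, ← ENNReal.ofReal_mul (gaussianPDFReal_nonneg _ _ _),
    ← ENNReal.ofReal_mul (exp_pos _).le, ← ENNReal.ofReal_mul (by positivity), hpdf,
    mul_assoc, ← exp_add, ← exp_add]
  gcongr
  have := exponent_le_half_sq_add_sq hρ hc t x y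
  rw [neg_div]
  linarith

/-- The event `{W₁ ≥ t, W₂ ≥ t}` in the coordinates `(Z₁, Z₂)`. -/
def wedge (t ρ : ℝ) : Set (ℝ × ℝ) := {p | t ≤ p.1 ∧ t ≤ ρ * p.1 + √(1 - ρ ^ 2) * p.2}

lemma measurableSet_wedge (t ρ : ℝ) : MeasurableSet (wedge t ρ) := by
  simp only [wedge, ofPred_and]
  exact (measurableSet_le measurable_const measurable_fst).inter
    (measurableSet_le measurable_const (by fun_prop))

lemma gaussianReal_prod_wedge_le {ρ t : ℝ} (hρ : |ρ| < 1) (ht : 0 < t) :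
    (gaussianReal 0 1).prod (gaussianReal 0 1) (wedge t ρ)
      ≤ ENNReal.ofReal ((1 + ρ) ^ 2 / (2 * π * √(1 - ρ ^ 2) * t ^ 2)
          * exp (-t ^ 2 / (1 + ρ))) := by
  obtain ⟨hρl, hρu⟩ := abs_lt.1 hρ
  set c := √(1 - ρ ^ 2)
  have hc : c ^ 2 = 1 - ρ ^ 2 := sq_sqrt (by nlinarith)
  have hc0 : 0 < c := sqrt_pos.2 (by nlinarith)
  set S := wedge t ρ
  set α := t / (1 + ρ)
  have hα : 0 < α := div_pos ht (by linarith)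
  set B := (2 * π)⁻¹ * exp (-t ^ 2 / (1 + ρ))
  set E : ℝ → ℝ≥0∞ := (Ici t).indicator fun w => ENNReal.ofReal (exp (-(α * (w - t))))
  have hEmeas : Measurable E := by
    refine Measurable.indicator ?_ measurableSet_Ici
    fun_prop
  have hE : ∫⁻ w, E w = ENNReal.ofReal α⁻¹ := by
    rw [lintegral_indicator measurableSet_Ici]
    exact lintegral_Ici_exp_neg_mul_sub t hα
  have hS : MeasurableSet S := measurableSet_wedge t ρ
  have hpoint : ∀ p : ℝ × ℝ, S.indicator (fun p => gaussianPDF 0 1 p.1 * gaussianPDF 0 1 p.2) p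
      ≤ ENNReal.ofReal B * (E p.1 * E (ρ * p.1 + c * p.2)) := by
    rintro ⟨x, y⟩
    by_cases hp : (x, y) ∈ S
    · rw [indicator_of_mem hp]
      simp only [E, indicator_of_mem (show x ∈ Ici t from hp.1),
        indicator_of_mem (show ρ * x + c * y ∈ Ici t from hp.2)]
      exact gaussianPDF_mul_gaussianPDF_le (by linarith) hc t x y
    · rw [indicator_of_notMem hp]
      exact zero_le
  calc (gaussianReal 0 1).prod (gaussianReal 0 1) S
      = ∫⁻ p in S, gaussianPDF 0 1 p.1 * gaussianPDF 0 1 p.2 ∂(volume.prod volume) := by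
        rw [gaussianReal_of_var_ne_zero 0 one_ne_zero,
          prod_withDensity (measurable_gaussianPDF _ _) (measurable_gaussianPDF _ _),
          withDensity_apply _ hS]
    _ ≤ ∫⁻ p, ENNReal.ofReal B * (E p.1 * E (ρ * p.1 + c * p.2)) ∂(volume.prod volume) := by
        rw [← lintegral_indicator hS]
        exact lintegral_mono hpoint
    _ = ENNReal.ofReal B * ∫⁻ x, E x * ∫⁻ y, E (ρ * x + c * y) := by
        have hEρ : ∀ x, Measurable fun y => E (ρ * x + c * y) :=
          fun x => hEmeas.comp (by fun_prop)
        rw [lintegral_const_mul _ (by fun_prop), lintegral_prod _ (by fun_prop)]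
        simp only [lintegral_const_mul _ (hEρ _)]
    _ = ENNReal.ofReal B * (ENNReal.ofReal c⁻¹ * ENNReal.ofReal α⁻¹ * ENNReal.ofReal α⁻¹) := by
        simp only [lintegral_comp_mul_add E hc0.ne', abs_inv, abs_of_pos hc0, hE]
        rw [lintegral_mul_const _ hEmeas, hE, mul_comm (ENNReal.ofReal α⁻¹)]
    _ = _ := by
        rw [← ENNReal.ofReal_mul (by positivity), ← ENNReal.ofReal_mul (by positivity),
          ← ENNReal.ofReal_mul (by positivity)]
        congr 1
        simp only [B, α]
        field_simp

lemma gaussianReal_map_const_mul_of_sq_eq_one {a : ℝ} (ha : a ^ 2 = 1) :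
    (gaussianReal 0 1).map (a * ·) = gaussianReal 0 1 := by
  rw [gaussianReal_map_const_mul, mul_zero]
  congr
  ext
  simp [ha]

lemma wedge_bound_le_of_abs_le {δ r t : ℝ} (hr : |r| ≤ δ) (hδ : δ < 1) (ht : 0 < t) :
    (1 + r) ^ 2 / (2 * π * √(1 - r ^ 2) * t ^ 2) * exp (-t ^ 2 / (1 + r))
      ≤ 2 / (π * √(1 - δ ^ 2) * t ^ 2) * exp (-t ^ 2 / (1 + δ)) := by
  obtain ⟨hrl, hru⟩ := abs_le.1 hr
  have hδ2 : 0 < 1 - δ ^ 2 := by nlinarith [abs_nonneg r]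
  have hr1 : 0 < 1 + r := by linarith
  have hsq : √(1 - δ ^ 2) ≤ √(1 - r ^ 2) := sqrt_le_sqrt (by nlinarith [sq_abs r, abs_nonneg r])
  have hexp : -t ^ 2 / (1 + r) ≤ -t ^ 2 / (1 + δ) := by
    rw [neg_div, neg_div, neg_le_neg_iff]
    exact div_le_div_of_nonneg_left (by positivity) hr1 (by linarith)
  calc (1 + r) ^ 2 / (2 * π * √(1 - r ^ 2) * t ^ 2) * exp (-t ^ 2 / (1 + r))
      ≤ 2 ^ 2 / (2 * π * √(1 - δ ^ 2) * t ^ 2) * exp (-t ^ 2 / (1 + δ)) := by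
        gcongr
        linarith
    _ = 2 / (π * √(1 - δ ^ 2) * t ^ 2) * exp (-t ^ 2 / (1 + δ)) := by
        field_simp

lemma exists_mem_mul_eq_abs (x : ℝ) : ∃ a ∈ ({1, -1} : Finset ℝ), a * x = |x| := by
  rcases abs_choice x with h | h
  exacts [⟨1, by simp, by rw [h, one_mul]⟩, ⟨-1, by simp, by rw [h, neg_one_mul]⟩]

lemma gaussianReal_prod_abs_le {δ ρ t : ℝ} (hρ : |ρ| ≤ δ) (hδ : δ < 1) (ht : 0 < t) :
    (gaussianReal 0 1).prod (gaussianReal 0 1)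
        {p : ℝ × ℝ | t ≤ |p.1| ∧ t ≤ |ρ * p.1 + √(1 - ρ ^ 2) * p.2|}
      ≤ ENNReal.ofReal (8 / (π * √(1 - δ ^ 2) * t ^ 2) * exp (-t ^ 2 / (1 + δ))) := by
  set μ := (gaussianReal 0 1).prod (gaussianReal 0 1)
  set signs : Finset (ℝ × ℝ) := {1, -1} ×ˢ {1, -1}
  set B := 2 / (π * √(1 - δ ^ 2) * t ^ 2) * exp (-t ^ 2 / (1 + δ))
  have hsigns : ∀ a ∈ ({1, -1} : Finset ℝ), a ^ 2 = 1 := by simp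
  have hsq : ∀ ε ∈ signs, (ε.1 * ε.2 * ρ) ^ 2 = ρ ^ 2 := by
    rintro ⟨a, b⟩ hab
    obtain ⟨ha, hb⟩ := Finset.mem_product.1 hab
    linear_combination (b ^ 2 * ρ ^ 2) * hsigns a ha + ρ ^ 2 * hsigns b hb
  have hcover : {p : ℝ × ℝ | t ≤ |p.1| ∧ t ≤ |ρ * p.1 + √(1 - ρ ^ 2) * p.2|}
      ⊆ ⋃ ε ∈ signs, Prod.map (ε.1 * ·) (ε.2 * ·) ⁻¹' wedge t (ε.1 * ε.2 * ρ) := by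
    rintro ⟨x, y⟩ ⟨hx, hw⟩
    obtain ⟨a, ha, hax⟩ := exists_mem_mul_eq_abs x
    obtain ⟨b, hb, hbw⟩ := exists_mem_mul_eq_abs (ρ * x + √(1 - ρ ^ 2) * y)
    have hab : (a, b) ∈ signs := Finset.mem_product.2 ⟨ha, hb⟩
    simp only [mem_iUnion]
    refine ⟨(a, b), hab, ?_⟩
    simp only [wedge, mem_preimage, Prod.map, mem_ofPred_eq, hsq _ hab]
    refine ⟨hax ▸ hx, ?_⟩
    rw [show a * b * ρ * (a * x) + √(1 - ρ ^ 2) * (b * y) = b * (ρ * x + √(1 - ρ ^ 2) * y) by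
      linear_combination (b * ρ * x) * hsigns a ha, hbw]
    exact hw
  have hwedge : ∀ ε ∈ signs,
      μ (Prod.map (ε.1 * ·) (ε.2 * ·) ⁻¹' wedge t (ε.1 * ε.2 * ρ)) ≤ ENNReal.ofReal B := by
    rintro ⟨a, b⟩ hab
    obtain ⟨ha, hb⟩ := Finset.mem_product.1 hab
    have hr : |a * b * ρ| = |ρ| := sq_eq_sq_iff_abs_eq_abs _ _ |>.1 (hsq _ hab)
    rw [← Measure.map_apply (by fun_prop) (measurableSet_wedge _ _),
      ← Measure.map_prod_map _ _ (measurable_const_mul a) (measurable_const_mul b),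
      gaussianReal_map_const_mul_of_sq_eq_one (hsigns a ha),
      gaussianReal_map_const_mul_of_sq_eq_one (hsigns b hb)]
    refine (gaussianReal_prod_wedge_le (by rw [hr]; linarith) ht).trans ?_
    exact ENNReal.ofReal_le_ofReal (wedge_bound_le_of_abs_le (hr ▸ hρ) hδ ht)
  calc μ {p : ℝ × ℝ | t ≤ |p.1| ∧ t ≤ |ρ * p.1 + √(1 - ρ ^ 2) * p.2|}
      ≤ ∑ ε ∈ signs, μ (Prod.map (ε.1 * ·) (ε.2 * ·) ⁻¹' wedge t (ε.1 * ε.2 * ρ)) :=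
        (measure_mono hcover).trans (measure_biUnion_finset_le _ _)
    _ ≤ signs.card • ENNReal.ofReal B := Finset.sum_le_card_nsmul _ _ _ hwedge
    _ = ENNReal.ofReal (8 / (π * √(1 - δ ^ 2) * t ^ 2) * exp (-t ^ 2 / (1 + δ))) := by
        rw [Finset.card_product, Finset.card_pair (by norm_num), nsmul_eq_mul,
          ← ENNReal.ofReal_natCast, ← ENNReal.ofReal_mul (by norm_num)]
        congr 1
        simp only [B]
        ring

lemma one_le_mul_inv_sq_mul_exp {δ t : ℝ} (hδ : 0 ≤ δ) (ht₀ : 0 ≤ t) (ht₁ : t ≤ 1) :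
    1 ≤ 4 * exp 1 * ((1 + t) ^ 2)⁻¹ * exp (-t ^ 2 / (1 + δ)) := by
  have hexp : exp (-1) ≤ exp (-t ^ 2 / (1 + δ)) := by
    gcongr
    rw [neg_div, neg_le_neg_iff, div_le_one (by linarith)]
    nlinarith
  have hsq : (4 : ℝ)⁻¹ ≤ ((1 + t) ^ 2)⁻¹ := by
    gcongr
    nlinarith
  calc (1 : ℝ) = 4 * exp 1 * 4⁻¹ * exp (-1) := by
        rw [exp_neg]; field_simp
    _ ≤ 4 * exp 1 * ((1 + t) ^ 2)⁻¹ * exp (-t ^ 2 / (1 + δ)) := by gcongr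

lemma inv_sq_le_four_mul_inv_one_add_sq {t : ℝ} (ht : 1 ≤ t) :
    (t ^ 2)⁻¹ ≤ 4 * ((1 + t) ^ 2)⁻¹ :=
  calc (t ^ 2)⁻¹ ≤ (((1 + t) / 2) ^ 2)⁻¹ := by gcongr; linarith
    _ = 4 * ((1 + t) ^ 2)⁻¹ := by rw [div_pow, inv_div]; ring

lemma ProbabilityTheory.IndepFun.measure_preimage_prodMk {Ω α β : Type*} [MeasurableSpace Ω]
    [MeasurableSpace α] [MeasurableSpace β] {P : Measure Ω} [IsFiniteMeasure P] {X : Ω → α}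
    {Y : Ω → β} (hXY : IndepFun X Y P) (hX : Measurable X) (hY : Measurable Y)
    {S : Set (α × β)} (hS : MeasurableSet S) :
    P ((fun ω => (X ω, Y ω)) ⁻¹' S) = (P.map X).prod (P.map Y) S := by
  rw [← (indepFun_iff_map_prod_eq_prod_map_map hX.aemeasurable hY.aemeasurable).1 hXY,
    Measure.map_apply (hX.prodMk hY) hS]

/-- For every `δ ∈ [0,1)` there exists a constant `C > 0` such that: if
`Z₁, Z₂` are independent standard normal random variables, `ρ ∈ [−δ, δ]`,
`W₁ = Z₁` and `W₂ = ρZ₁ + √(1−ρ²)Z₂`, then for all `t ≥ 0`,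
`P(|W₁| ≥ t, |W₂| ≥ t) ≤ C (1+t)⁻² exp(−t²/(1+δ))`. -/
theorem stmt_6 (δ : ℝ) (hδ0 : 0 ≤ δ) (hδ1 : δ < 1) :
    ∃ C : ℝ, 0 < C ∧
      ∀ (Ω : Type) [MeasureSpace Ω] [IsProbabilityMeasure (ℙ : Measure Ω)]
        (Z₁ Z₂ : Ω → ℝ), Measurable Z₁ → Measurable Z₂ →
        IndepFun Z₁ Z₂ ℙ →
        Measure.map Z₁ ℙ = gaussianReal 0 1 →
        Measure.map Z₂ ℙ = gaussianReal 0 1 →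
        ∀ ρ : ℝ, -δ ≤ ρ → ρ ≤ δ →
        ∀ t : ℝ, 0 ≤ t →
          (ℙ {ω | t ≤ |Z₁ ω| ∧
              t ≤ |ρ * Z₁ ω + Real.sqrt (1 - ρ ^ 2) * Z₂ ω|}).toReal
            ≤ C * ((1 + t) ^ 2)⁻¹ * Real.exp (-t ^ 2 / (1 + δ)) := by
  refine ⟨4 * exp 1 + 32 / (π * √(1 - δ ^ 2)), by positivity, ?_⟩
  intro Ω _ _ Z₁ Z₂ hZ₁ hZ₂ hind hlaw₁ hlaw₂ ρ hρl hρu t ht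
  rcases le_or_gt t 1 with ht₁ | ht₁
  · calc _ ≤ 1 := ENNReal.toReal_le_of_le_ofReal zero_le_one (by simpa using prob_le_one)
      _ ≤ 4 * exp 1 * ((1 + t) ^ 2)⁻¹ * exp (-t ^ 2 / (1 + δ)) :=
        one_le_mul_inv_sq_mul_exp hδ0 ht ht₁
      _ ≤ _ := by gcongr; exact le_add_of_nonneg_right (by positivity)
  · have hS : MeasurableSet {p : ℝ × ℝ | t ≤ |p.1| ∧ t ≤ |ρ * p.1 + √(1 - ρ ^ 2) * p.2|} := by
      simp only [ofPred_and]
      exact (measurableSet_le measurable_const (by fun_prop)).inter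
        (measurableSet_le measurable_const (by fun_prop))
    have key := gaussianReal_prod_abs_le (abs_le.2 ⟨hρl, hρu⟩) hδ1 (by linarith : 0 < t)
    have hlaw := hind.measure_preimage_prodMk hZ₁ hZ₂ hS
    rw [hlaw₁, hlaw₂] at hlaw
    rw [← hlaw] at key
    refine (ENNReal.toReal_le_of_le_ofReal (by positivity) key).trans ?_
    calc 8 / (π * √(1 - δ ^ 2) * t ^ 2) * exp (-t ^ 2 / (1 + δ))
        = 8 / (π * √(1 - δ ^ 2)) * (t ^ 2)⁻¹ * exp (-t ^ 2 / (1 + δ)) := by ring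
      _ ≤ 8 / (π * √(1 - δ ^ 2)) * (4 * ((1 + t) ^ 2)⁻¹) * exp (-t ^ 2 / (1 + δ)) := by
        gcongr; exact inv_sq_le_four_mul_inv_one_add_sq ht₁.le
      _ = 32 / (π * √(1 - δ ^ 2)) * ((1 + t) ^ 2)⁻¹ * exp (-t ^ 2 / (1 + δ)) := by ring
      _ ≤ _ := by gcongr; exact le_add_of_nonneg_left (by positivity)
end

section
/- Let m ≥ 1, x₁, …, x_m ∈ ℝ, q > 0, α ∈ (0,1) and T > 0. Define N(t) = Card{k : 1 ≤ k ≤ m, |x_k| ≥ t} and G(t) = 2 − 2Φ(t), where Φ is the standard normal distribution function. Suppose the set S = { t ∈ [0,T] : G(t)·q / max(N(t), 1) ≤ α } is nonempty and that t̂ := inf S satisfies 0 < t̂ < T. Then G(t̂)·q / max(N(t̂), 1) = α. -/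
open ProbabilityTheory Finset

/-- The standard normal distribution function `Φ(t) = P(N(0,1) ≤ t)`. -/
noncomputable def Phi (t : ℝ) : ℝ := ((gaussianReal 0 1) (Set.Iic t)).toReal

/-- `G(t) = 2 − 2Φ(t)`. -/
noncomputable def Gfun (t : ℝ) : ℝ := 2 - 2 * Phi t

/-!
The infimum `t̂` of `S` lies in the closure of `S`. On `S` we have `G q ≤ α max(N, 1)`, and
`N` is antitone, so continuity of `G` gives `G(t̂) q ≤ α max(N(t̂), 1)`. Conversely, `N` only
jumps at the values `|x_k|` and is left-continuous, so it is constant on some `(t̂ - ε, t̂]`;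
the points there lie in `[0, T] \ S`, where `G q > α max(N(t̂), 1)`, and letting them tend to
`t̂` gives the reverse inequality.
-/

open Filter Topology MeasureTheory

theorem StieltjesFunction.continuous_of_measure_singleton (f : StieltjesFunction ℝ)
    (hf : ∀ a, f.measure {a} = 0) : Continuous f := by
  refine continuous_iff_continuousAt.2 fun a ↦ ?_
  rw [f.mono.continuousAt_iff_leftLim_eq_rightLim, f.rightLim_eq]
  have h := hf a
  rw [f.measure_singleton, ENNReal.ofReal_eq_zero] at h
  exact le_antisymm (f.mono.leftLim_le le_rfl) (sub_nonpos.1 h)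

theorem ProbabilityTheory.continuous_cdf (μ : Measure ℝ) [IsProbabilityMeasure μ]
    [NullSingletonClass μ] : Continuous (cdf μ) :=
  (cdf μ).continuous_of_measure_singleton fun a ↦ by rw [measure_cdf, measure_singleton]

theorem continuous_Phi : Continuous Phi := by
  have := nullSingletonClass_gaussianReal (μ := 0) one_ne_zero
  convert continuous_cdf (gaussianReal 0 1) using 1
  ext t
  rw [cdf_eq_real, measureReal_def, Phi]

theorem continuous_Gfun : Continuous Gfun :=
  continuous_const.sub (continuous_const.mul continuous_Phi)

theorem eventually_card_filter_le_eq_nhdsLT {ι : Type*} [Fintype ι] (y : ι → ℝ) (s : ℝ) :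
    ∀ᶠ t in 𝓝[<] s, #(univ.filter fun k ↦ t ≤ y k) = #(univ.filter fun k ↦ s ≤ y k) := by
  have hk : ∀ k, ∀ᶠ t in 𝓝[<] s, (t ≤ y k ↔ s ≤ y k) := by
    intro k
    rcases le_or_gt s (y k) with hs | hs
    · filter_upwards [self_mem_nhdsWithin] with t ht
      exact iff_of_true (ht.le.trans hs) hs
    · filter_upwards [Ioo_mem_nhdsLT hs] with t ht
      exact iff_of_false (not_le.2 ht.1) (not_le.2 hs)
  filter_upwards [eventually_all.2 hk] with t ht
  simp only [ht]

section InfimumOfSublevelSet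

variable {f g : ℝ → ℝ} {S : Set ℝ} {a : ℝ}

theorem le_of_isGLB_of_forall_le (hf : ContinuousAt f a) (hg : Antitone g)
    (hfg : ∀ t ∈ S, f t ≤ g t) (ha : IsGLB S a) (hne : S.Nonempty) : f a ≤ g a := by
  have hclosure : (𝓝[S] a).NeBot := mem_closure_iff_nhdsWithin_neBot.1 (ha.mem_closure hne)
  refine le_of_tendsto (hf.tendsto.mono_left (nhdsWithin_le_nhds (s := S))) ?_
  filter_upwards [self_mem_nhdsWithin] with t ht
  exact (hfg t ht).trans (hg (ha.1 ht))

theorem ge_of_eventually_lt_nhdsLT (hf : ContinuousAt f a)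
    (hga : ∀ᶠ t in 𝓝[<] a, g t = g a) (hlt : ∀ᶠ t in 𝓝[<] a, g t < f t) : g a ≤ f a := by
  refine ge_of_tendsto (hf.tendsto.mono_left (nhdsWithin_le_nhds (s := Set.Iio a))) ?_
  filter_upwards [hga, hlt] with t hgt hlt
  exact hgt ▸ hlt.le

end InfimumOfSublevelSet

theorem stmt_13_general {m : ℕ} (x : Fin m → ℝ) (q α T : ℝ)
    (hα0 : 0 < α)
    (N : ℝ → ℝ) (hN : ∀ t, N t = ((Finset.univ.filter (fun k => t ≤ |x k|)).card : ℝ))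
    (S : Set ℝ) (hS : S = {t : ℝ | t ∈ Set.Icc 0 T ∧ Gfun t * q / max (N t) 1 ≤ α})
    (hne : S.Nonempty) (that : ℝ) (hthat : that = sInf S)
    (h0 : 0 < that) (h1 : that < T) :
    Gfun that * q / max (N that) 1 = α := by
  have hmax : ∀ t, 0 < max (N t) 1 := fun t ↦ zero_lt_one.trans_le (le_max_right _ _)
  have hmemS : ∀ t, t ∈ S ↔ t ∈ Set.Icc 0 T ∧ Gfun t * q ≤ α * max (N t) 1 := fun t ↦ by
    rw [hS, Set.mem_ofPred_eq, div_le_iff₀ (hmax t)]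
  have hGLB : IsGLB S that := hthat ▸ isGLB_csInf hne ⟨0, fun t ht ↦ ((hmemS t).1 ht).1.1⟩
  have hanti : Antitone fun t ↦ α * max (N t) 1 := by
    intro s t hst
    simp only [hN]
    gcongr
  have hconst : ∀ᶠ t in 𝓝[<] that, α * max (N t) 1 = α * max (N that) 1 := by
    filter_upwards [eventually_card_filter_le_eq_nhdsLT (fun k ↦ |x k|) that] with t ht
    rw [hN, hN, ht]
  have houtside : ∀ᶠ t in 𝓝[<] that, α * max (N t) 1 < Gfun t * q := by
    filter_upwards [Ioo_mem_nhdsLT h0] with t ht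
    have htS : t ∉ S := fun h ↦ ht.2.not_ge (hGLB.1 h)
    simpa [hmemS, ht.1.le, (ht.2.trans h1).le] using htS
  have hcont : ContinuousAt (fun t ↦ Gfun t * q) that :=
    (continuous_Gfun.mul continuous_const).continuousAt
  rw [div_eq_iff (hmax that).ne']
  exact le_antisymm (le_of_isGLB_of_forall_le hcont hanti (fun t ht ↦ ((hmemS t).1 ht).2) hGLB hne)
    (ge_of_eventually_lt_nhdsLT hcont hconst houtside)

/-- Let `x₁, …, x_m ∈ ℝ`, `q > 0`, `α ∈ (0,1)`, `T > 0`.  Define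
`N(t) = Card{k : |x_k| ≥ t}`.  Suppose the set
`S = {t ∈ [0,T] : G(t) q / max(N(t),1) ≤ α}` is nonempty and `t̂ := inf S` satisfies
`0 < t̂ < T`.  Then `G(t̂) q / max(N(t̂),1) = α`. -/
theorem stmt_13 {m : ℕ} (hm : 1 ≤ m) (x : Fin m → ℝ) (q α T : ℝ)
    (hq : 0 < q) (hα0 : 0 < α) (hα1 : α < 1) (hT : 0 < T)
    (N : ℝ → ℝ) (hN : ∀ t, N t = ((Finset.univ.filter (fun k => t ≤ |x k|)).card : ℝ))
    (S : Set ℝ) (hS : S = {t : ℝ | t ∈ Set.Icc 0 T ∧ Gfun t * q / max (N t) 1 ≤ α})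
    (hne : S.Nonempty) (that : ℝ) (hthat : that = sInf S)
    (h0 : 0 < that) (h1 : that < T) :
    Gfun that * q / max (N that) 1 = α :=
  stmt_13_general x q α T hα0 N hN S hS hne that hthat h0 h1
end

section
/- Let G be a simple graph on a finite vertex set of cardinality p in which every vertex has degree at most d, where d ≥ 1. Then the number of 4-element vertex subsets S such that the subgraph of G induced on S is connected is at most p·d³. -/
open Finset

set_option maxHeartbeats 1000000

section Helpers
variable {V : Type*} [Fintype V] [DecidableEq V] (G : SimpleGraph V)


variable {V : Type*} [Fintype V] [DecidableEq V] (G : SimpleGraph V)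

lemma card3_le (x y z : V) : ({x,y,z} : Finset V).card ≤ 3 :=
  le_trans (card_insert_le _ _) (Nat.succ_le_succ (le_trans (card_insert_le _ _) (by simp)))

lemma card4_ne {a b c e : V} (h : ({a,b,c,e} : Finset V).card = 4) :
    a ≠ b ∧ a ≠ c ∧ a ≠ e ∧ b ≠ c ∧ b ≠ e ∧ c ≠ e := by
  refine ⟨?_, ?_, ?_, ?_, ?_, ?_⟩ <;> intro he <;> subst he
  · have h3 : ({a,a,c,e} : Finset V) = {a,c,e} := by ext t; simp only [mem_insert, mem_singleton]; tauto
    rw [h3] at h; have := card3_le a c e (V := V); omega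
  · have h3 : ({a,b,a,e} : Finset V) = {a,b,e} := by ext t; simp only [mem_insert, mem_singleton]; tauto
    rw [h3] at h; have := card3_le a b e (V := V); omega
  · have h3 : ({a,b,c,a} : Finset V) = {a,b,c} := by ext t; simp only [mem_insert, mem_singleton]; tauto
    rw [h3] at h; have := card3_le a b c (V := V); omega
  · have h3 : ({a,b,b,e} : Finset V) = {a,b,e} := by ext t; simp only [mem_insert, mem_singleton]; tauto
    rw [h3] at h; have := card3_le a b e (V := V); omega
  · have h3 : ({a,b,c,b} : Finset V) = {a,b,c} := by ext t; simp only [mem_insert, mem_singleton]; tauto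
    rw [h3] at h; have := card3_le a b c (V := V); omega
  · have h3 : ({a,b,c,c} : Finset V) = {a,b,c} := by ext t; simp only [mem_insert, mem_singleton]; tauto
    rw [h3] at h; have := card3_le a b c (V := V); omega

lemma grow {S T : Finset V} (hconn : (G.induce (S : Set V)).Connected)
    (hTS : T ⊆ S) (hT : T.Nonempty) (hne : ∃ y ∈ S, y ∉ T) :
    ∃ x ∈ S, x ∉ T ∧ ∃ t ∈ T, G.Adj t x := by
  obtain ⟨y, hyS, hyT⟩ := hne
  obtain ⟨t0, ht0⟩ := hT
  have key : ∀ (u v : (S : Set V)) (w : (G.induce (S : Set V)).Walk u v),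
      (↑u ∈ T) → (↑v ∉ T) → ∃ x ∈ S, x ∉ T ∧ ∃ t ∈ T, G.Adj t x := by
    intro u v w
    induction w with
    | nil => intro h1 h2; exact absurd h1 h2
    | @cons a b c h p ih =>
      intro h1 h2
      by_cases hm : (↑b : V) ∈ T
      · exact ih hm h2
      · exact ⟨↑b, b.2, hm, ↑a, h1, by simpa using h⟩
  obtain ⟨w⟩ := hconn.preconnected ⟨t0, hTS ht0⟩ ⟨y, hyS⟩
  exact key _ _ w ht0 hyT

lemma path_or_star {S : Finset V} (h4 : S.card = 4)
    (hconn : (G.induce (S : Set V)).Connected) :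
    (∃ a b c e : V, S = {a,b,c,e} ∧ G.Adj a b ∧ G.Adj b c ∧ G.Adj c e) ∨
    (∃ c a b e : V, S = {c,a,b,e} ∧ G.Adj c a ∧ G.Adj c b ∧ G.Adj c e) := by
  have hS0 : S.Nonempty := by rw [← Finset.card_pos, h4]; norm_num
  obtain ⟨v1, hv1⟩ := hS0
  -- get v2
  have hsub1 : ¬ S ⊆ {v1} := by
    intro hs; have := card_le_card hs; simp at this; omega
  obtain ⟨v2, hv2S, hv2n, t, ht, hadj12⟩ :=
    grow G hconn (by simpa using hv1) ⟨v1, by simp⟩ (Finset.not_subset.mp hsub1)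
  simp only [mem_singleton] at ht hv2n
  rw [ht] at hadj12
  -- get v3
  have hsub2 : ¬ S ⊆ {v1, v2} := by
    intro hs; have := card_le_card hs
    have := card_insert_le v1 ({v2} : Finset V); simp at this; omega
  obtain ⟨v3, hv3S, hv3n, t3, ht3, hadj3⟩ :=
    grow G hconn (by intro x hx; simp at hx; rcases hx with h | h <;> subst h <;> assumption)
      ⟨v1, by simp⟩ (Finset.not_subset.mp hsub2)
  simp only [mem_insert, mem_singleton] at ht3 hv3n
  push_neg at hv3n
  -- get v4
  have hsub3 : ¬ S ⊆ {v1, v2, v3} := by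
    intro hs; have := card_le_card hs
    have := card3_le v1 v2 v3 (V := V); omega
  obtain ⟨v4, hv4S, hv4n, t4, ht4, hadj4⟩ :=
    grow G hconn (by intro x hx; simp at hx; rcases hx with h | h | h <;> subst h <;> assumption)
      ⟨v1, by simp⟩ (Finset.not_subset.mp hsub3)
  simp only [mem_insert, mem_singleton] at ht4 hv4n
  push_neg at hv4n
  -- S = {v1,v2,v3,v4}
  have hSeq : S = {v1, v2, v3, v4} := by
    symm
    apply Finset.eq_of_subset_of_card_le
    · intro x hx; simp at hx; rcases hx with h | h | h | h <;> subst h <;> assumption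
    · rw [h4]
      have c1 : ({v1,v2,v3,v4} : Finset V).card = 4 := by
        rw [card_insert_of_notMem (by simp; tauto),
            card_insert_of_notMem (by simp; tauto),
            card_insert_of_notMem (by simp; tauto), card_singleton]
      omega
  rcases ht3 with h3 | h3 <;> rw [h3] at hadj3
  · -- Adj v1 v3
    rcases ht4 with h4' | h4' | h4' <;> rw [h4'] at hadj4
    · -- Adj v1 v4 : star center v1
      right
      exact ⟨v1, v2, v3, v4, hSeq, hadj12, hadj3, hadj4⟩
    · -- Adj v2 v4 : path v3-v1-v2-v4
      left
      refine ⟨v3, v1, v2, v4, ?_, hadj3.symm, hadj12, hadj4⟩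
      rw [hSeq]; ext t; simp only [mem_insert, mem_singleton]; tauto
    · -- Adj v3 v4 : path v2-v1-v3-v4
      left
      refine ⟨v2, v1, v3, v4, ?_, hadj12.symm, hadj3, hadj4⟩
      rw [hSeq]; ext t; simp only [mem_insert, mem_singleton]; tauto
  · -- Adj v2 v3
    rcases ht4 with h4' | h4' | h4' <;> rw [h4'] at hadj4
    · -- Adj v1 v4 : path v4-v1-v2-v3
      left
      refine ⟨v4, v1, v2, v3, ?_, hadj4.symm, hadj12, hadj3⟩
      rw [hSeq]; ext t; simp only [mem_insert, mem_singleton]; tauto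
    · -- Adj v2 v4 : star center v2
      right
      refine ⟨v2, v1, v3, v4, ?_, hadj12.symm, hadj3, hadj4⟩
      rw [hSeq]; ext t; simp only [mem_insert, mem_singleton]; tauto
    · -- Adj v3 v4 : path v1-v2-v3-v4
      left
      exact ⟨v1, v2, v3, v4, hSeq, hadj12, hadj3, hadj4⟩

lemma sort3 {α : Type*} [LinearOrder α] (P : α → Prop) {x y z : α}
    (hxy : x ≠ y) (hxz : x ≠ z) (hyz : y ≠ z) (hx : P x) (hy : P y) (hz : P z) :
    ∃ a b c, a < b ∧ b < c ∧ P a ∧ P b ∧ P c ∧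
      ∀ t, (t = a ∨ t = b ∨ t = c) ↔ (t = x ∨ t = y ∨ t = z) := by
  obtain h1 | h1 := hxy.lt_or_gt
  · obtain h2 | h2 := hyz.lt_or_gt
    · exact ⟨x, y, z, h1, h2, hx, hy, hz, fun t => by tauto⟩
    · obtain h3 | h3 := hxz.lt_or_gt
      · exact ⟨x, z, y, h3, h2, hx, hz, hy, fun t => by tauto⟩
      · exact ⟨z, x, y, h3, h1, hz, hx, hy, fun t => by tauto⟩
  · obtain h2 | h2 := hxz.lt_or_gt
    · exact ⟨y, x, z, h1, h2, hy, hx, hz, fun t => by tauto⟩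
    · obtain h3 | h3 := hyz.lt_or_gt
      · exact ⟨y, z, x, h3, h2, hy, hz, hx, fun t => by tauto⟩
      · exact ⟨z, y, x, h3, h1, hz, hy, hx, fun t => by tauto⟩

def pathProp [LinearOrder V] (G : SimpleGraph V) (S : Finset V) (q : V × V × V × V) : Prop :=
  S = {q.1, q.2.1, q.2.2.1, q.2.2.2} ∧ G.Adj q.1 q.2.1 ∧ G.Adj q.2.1 q.2.2.1 ∧
    G.Adj q.2.2.1 q.2.2.2 ∧ q.1 < q.2.2.2

def starProp [LinearOrder V] (G : SimpleGraph V) (S : Finset V) (q : V × V × V × V) : Prop :=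
  S = {q.1, q.2.1, q.2.2.1, q.2.2.2} ∧ G.Adj q.1 q.2.1 ∧ G.Adj q.1 q.2.2.1 ∧
    G.Adj q.1 q.2.2.2 ∧ q.2.1 < q.2.2.1 ∧ q.2.2.1 < q.2.2.2

lemma pp_or_sp [LinearOrder V] {S : Finset V} (h4 : S.card = 4)
    (hconn : (G.induce (S : Set V)).Connected) :
    (∃ q, pathProp G S q) ∨ (∃ q, starProp G S q) := by
  rcases path_or_star G h4 hconn with ⟨a, b, c, e, hSeq, h1, h2, h3⟩ | ⟨c, a, b, e, hSeq, h1, h2, h3⟩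
  · left
    have hne := card4_ne (by rw [← hSeq]; exact h4)
    rcases hne.2.2.1.lt_or_gt with h | h
    · exact ⟨(a, b, c, e), hSeq, h1, h2, h3, h⟩
    · refine ⟨(e, c, b, a), ?_, h3.symm, h2.symm, h1.symm, h⟩
      rw [hSeq]; ext t; simp only [mem_insert, mem_singleton]; tauto
  · right
    have hne := card4_ne (by rw [← hSeq]; exact h4)
    obtain ⟨a', b', e', hlt1, hlt2, ha', hb', he', hiff⟩ :=
      sort3 (G.Adj c) hne.2.2.2.1 hne.2.2.2.2.1 hne.2.2.2.2.2 h1 h2 h3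
    refine ⟨(c, a', b', e'), ?_, ha', hb', he', hlt1, hlt2⟩
    rw [hSeq]; ext t; simp only [mem_insert, mem_singleton]
    constructor
    · rintro (h | h); · tauto
      · have := (hiff t).mpr h; tauto
    · rintro (h | h); · tauto
      · have := (hiff t).mp h; tauto

section Count
variable [DecidableRel G.Adj]

-- walk target
def Wfin : Finset (V × V × V × V) :=
  univ.biUnion fun a => (G.neighborFinset a).biUnion fun b =>
    ((G.neighborFinset b).erase a).biUnion fun c =>
      ((G.neighborFinset c).erase b).image fun e => (a, b, c, e)

def Ufin : Finset (V × V × V × V) :=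
  univ.biUnion fun c => (G.neighborFinset c).biUnion fun a =>
    ((G.neighborFinset c).erase a).biUnion fun b =>
      (((G.neighborFinset c).erase a).erase b).image fun e => (c, a, b, e)

lemma Wfin_card {d : ℕ} (hdeg : ∀ v : V, G.degree v ≤ d) :
    (Wfin G).card ≤ Fintype.card V * (d * ((d - 1) * (d - 1))) := by
  have := Finset.card_univ (α := V)
  rw [← this]
  apply card_biUnion_le_card_mul
  intro a _
  calc ((G.neighborFinset a).biUnion fun b =>
      ((G.neighborFinset b).erase a).biUnion fun c =>
        ((G.neighborFinset c).erase b).image fun e => (a, b, c, e)).card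
      ≤ (G.neighborFinset a).card * ((d-1) * (d-1)) := by
        apply card_biUnion_le_card_mul
        intro b hb
        calc (((G.neighborFinset b).erase a).biUnion fun c =>
            ((G.neighborFinset c).erase b).image fun e => (a, b, c, e)).card
            ≤ ((G.neighborFinset b).erase a).card * (d-1) := by
              apply card_biUnion_le_card_mul
              intro c hc
              refine le_trans (card_image_le) ?_
              have hbc : b ∈ G.neighborFinset c := by
                rw [SimpleGraph.mem_neighborFinset]
                exact (SimpleGraph.mem_neighborFinset G b c |>.mp (Finset.mem_erase.mp hc).2).symm
              have hnc : (G.neighborFinset c).card ≤ d := by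
                rw [SimpleGraph.card_neighborFinset_eq_degree]; exact hdeg c
              rw [card_erase_of_mem hbc]
              omega
          _ ≤ (d-1) * (d-1) := by
              apply Nat.mul_le_mul_right
              have hab : a ∈ G.neighborFinset b := by
                rw [SimpleGraph.mem_neighborFinset]
                exact (SimpleGraph.mem_neighborFinset G a b |>.mp hb).symm
              have hnb : (G.neighborFinset b).card ≤ d := by
                rw [SimpleGraph.card_neighborFinset_eq_degree]; exact hdeg b
              rw [card_erase_of_mem hab]
              omega
    _ ≤ d * ((d-1) * (d-1)) := by
        apply Nat.mul_le_mul_right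
        rw [SimpleGraph.card_neighborFinset_eq_degree]; exact hdeg a

lemma Ufin_card {d : ℕ} (hdeg : ∀ v : V, G.degree v ≤ d) :
    (Ufin G).card ≤ Fintype.card V * (d * ((d - 1) * (d - 2))) := by
  have := Finset.card_univ (α := V)
  rw [← this]
  apply card_biUnion_le_card_mul
  intro c _
  calc ((G.neighborFinset c).biUnion fun a =>
      ((G.neighborFinset c).erase a).biUnion fun b =>
        (((G.neighborFinset c).erase a).erase b).image fun e => (c, a, b, e)).card
      ≤ (G.neighborFinset c).card * ((d-1) * (d-2)) := by
        apply card_biUnion_le_card_mul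
        intro a ha
        calc (((G.neighborFinset c).erase a).biUnion fun b =>
            (((G.neighborFinset c).erase a).erase b).image fun e => (c, a, b, e)).card
            ≤ ((G.neighborFinset c).erase a).card * (d-2) := by
              apply card_biUnion_le_card_mul
              intro b hb
              refine le_trans (card_image_le) ?_
              rw [card_erase_of_mem hb, card_erase_of_mem ha]
              have hnc : (G.neighborFinset c).card ≤ d := by
                rw [SimpleGraph.card_neighborFinset_eq_degree]; exact hdeg c
              omega
          _ ≤ (d-1) * (d-2) := by
              apply Nat.mul_le_mul_right
              rw [card_erase_of_mem ha]
              have hnc : (G.neighborFinset c).card ≤ d := by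
                rw [SimpleGraph.card_neighborFinset_eq_degree]; exact hdeg c
              omega
    _ ≤ d * ((d-1) * (d-2)) := by
        apply Nat.mul_le_mul_right
        rw [SimpleGraph.card_neighborFinset_eq_degree]; exact hdeg c


end Count
end Helpers

/-- Let `G` be a simple graph on a finite vertex set of cardinality `p` in
which every vertex has degree at most `d`, where `d ≥ 1`.  Then the number of `4`-element
vertex subsets `S` such that the subgraph of `G` induced on `S` is connected is at most
`p * d³`. -/
theorem stmt_15 {V : Type*} [Fintype V] [DecidableEq V]
    (G : SimpleGraph V) [DecidableRel G.Adj]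
    (d : ℕ) (hd : 1 ≤ d) (hdeg : ∀ v : V, G.degree v ≤ d) :
    ((Finset.univ.powersetCard 4).filter
        (fun S : Finset V => (G.induce (S : Set V)).Connected)).card
      ≤ Fintype.card V * d ^ 3 := by
  classical
  rcases isEmpty_or_nonempty V with hV | hV
  · have h0 : (univ : Finset V) = ∅ := Finset.univ_eq_empty
    rw [h0]
    have : Finset.powersetCard 4 (∅ : Finset V) = ∅ := by
      rw [Finset.powersetCard_eq_empty]; simp
    rw [this]
    simp
  · haveI : Inhabited V := Classical.inhabited_of_nonempty hV
    letI : LinearOrder V := LinearOrder.lift' (Fintype.equivFin V) (Fintype.equivFin V).injective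
    set A := ((univ : Finset V).powersetCard 4).filter
        (fun S : Finset V => (G.induce (S : Set V)).Connected) with hA
    have hmem : ∀ S ∈ A, S.card = 4 ∧ (G.induce (S : Set V)).Connected := by
      intro S hS
      rw [hA, mem_filter, mem_powersetCard] at hS
      exact ⟨hS.1.2, hS.2⟩
    set PP : Finset V → Prop := fun S => ∃ q, pathProp G S q with hPP
    set SS : Finset V → Prop := fun S => ∃ q, starProp G S q with hSS
    set Ap := A.filter PP with hAp
    set As := A.filter (fun S => ¬ PP S) with hAs2
    have hsplit : Ap.card + As.card = A.card := by
      rw [hAp, hAs2]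
      exact card_filter_add_card_filter_not PP
    have hAsS : ∀ S ∈ As, SS S := by
      intro S hS
      rw [hAs2, mem_filter] at hS
      obtain ⟨h4, hconn⟩ := hmem S hS.1
      rcases pp_or_sp G h4 hconn with h | h
      · exact absurd h hS.2
      · exact h
    -- choice functions
    set f : Finset V → V × V × V × V := fun S => if h : PP S then h.choose else default with hfdef
    have hf : ∀ S, PP S → pathProp G S (f S) := by
      intro S h
      rw [hfdef]
      simp only [dif_pos h]
      exact h.choose_spec
    set g : Finset V → V × V × V × V := fun S => if h : SS S then h.choose else default with hgdef
    have hg : ∀ S, SS S → starProp G S (g S) := by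
      intro S h
      rw [hgdef]
      simp only [dif_pos h]
      exact h.choose_spec
    set rev : V × V × V × V → V × V × V × V := fun q => (q.2.2.2, q.2.2.1, q.2.1, q.1) with hrev
    set sw : V × V × V × V → V × V × V × V := fun q => (q.1, q.2.1, q.2.2.2, q.2.2.1) with hsw
    -- path bound
    have hpath : 2 * Ap.card ≤ (Wfin G).card := by
      have hfP : ∀ S ∈ Ap, PP S := fun S hS => (mem_filter.mp hS).2
      have hsub1 : Ap.image f ⊆ Wfin G := by
        intro q hq
        obtain ⟨S, hS, rfl⟩ := mem_image.mp hq
        obtain ⟨hSeq, h1, h2, h3, hlt⟩ := hf S (hfP S hS)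
        have hne := card4_ne (by rw [← hSeq]; exact (hmem S (mem_filter.mp hS).1).1)
        simp only [Wfin, mem_biUnion, mem_image, mem_erase, SimpleGraph.mem_neighborFinset]
        exact ⟨(f S).1, mem_univ _, (f S).2.1, h1, (f S).2.2.1, ⟨hne.2.1.symm, h2⟩,
          ⟨(f S).2.2.2, ⟨hne.2.2.2.2.1.symm, h3⟩, rfl⟩⟩
      have hsub2 : Ap.image (fun S => rev (f S)) ⊆ Wfin G := by
        intro q hq
        obtain ⟨S, hS, rfl⟩ := mem_image.mp hq
        obtain ⟨hSeq, h1, h2, h3, hlt⟩ := hf S (hfP S hS)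
        have hne := card4_ne (by rw [← hSeq]; exact (hmem S (mem_filter.mp hS).1).1)
        simp only [Wfin, hrev, mem_biUnion, mem_image, mem_erase, SimpleGraph.mem_neighborFinset]
        exact ⟨(f S).2.2.2, mem_univ _, (f S).2.2.1, h3.symm, (f S).2.1,
          ⟨hne.2.2.2.2.1, h2.symm⟩, ⟨(f S).1, ⟨hne.2.1, h1.symm⟩, rfl⟩⟩
      have hinj1 : Set.InjOn f Ap := by
        intro S hS S' hS' heq
        have e1 := (hf S (hfP S hS)).1
        have e2 := (hf S' (hfP S' hS')).1
        rw [e1, e2, heq]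
      have hinj2 : Set.InjOn (fun S => rev (f S)) Ap := by
        intro S hS S' hS' heq
        apply hinj1 hS hS'
        have : ∀ q q' : V × V × V × V, rev q = rev q' → q = q' := by
          intro q q' h
          obtain ⟨a, b, c, e⟩ := q
          obtain ⟨a', b', c', e'⟩ := q'
          simp only [hrev, Prod.mk.injEq] at h ⊢
          tauto
        exact this _ _ heq
      have hdisj : Disjoint (Ap.image f) (Ap.image (fun S => rev (f S))) := by
        rw [Finset.disjoint_left]
        intro q hq1 hq2
        obtain ⟨S, hS, rfl⟩ := mem_image.mp hq1
        obtain ⟨S', hS', heq⟩ := mem_image.mp hq2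
        have l1 : (f S).1 < (f S).2.2.2 := (hf S (hfP S hS)).2.2.2.2
        have l2 : (f S').1 < (f S').2.2.2 := (hf S' (hfP S' hS')).2.2.2.2
        rw [hrev] at heq
        have e1 : (f S').2.2.2 = (f S).1 := congrArg Prod.fst heq
        have e4 : (f S').1 = (f S).2.2.2 := congrArg (fun q => q.2.2.2) heq
        rw [e1, e4] at l2
        exact absurd l1 (not_lt.mpr l2.le)
      calc 2 * Ap.card = (Ap.image f).card + (Ap.image (fun S => rev (f S))).card := by
            rw [card_image_of_injOn hinj1, card_image_of_injOn hinj2]; ring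
        _ = ((Ap.image f) ∪ (Ap.image (fun S => rev (f S)))).card :=
            (card_union_of_disjoint hdisj).symm
        _ ≤ (Wfin G).card := card_le_card (union_subset hsub1 hsub2)
    -- star bound
    have hstar : 2 * As.card ≤ (Ufin G).card := by
      have hsub1 : As.image g ⊆ Ufin G := by
        intro q hq
        obtain ⟨S, hS, rfl⟩ := mem_image.mp hq
        obtain ⟨hSeq, h1, h2, h3, hlt1, hlt2⟩ := hg S (hAsS S hS)
        simp only [Ufin, mem_biUnion, mem_image, mem_erase, SimpleGraph.mem_neighborFinset]
        exact ⟨(g S).1, mem_univ _, (g S).2.1, h1, (g S).2.2.1, ⟨hlt1.ne', h2⟩,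
          ⟨(g S).2.2.2, ⟨hlt2.ne', (lt_trans hlt1 hlt2).ne', h3⟩, rfl⟩⟩
      have hsub2 : As.image (fun S => sw (g S)) ⊆ Ufin G := by
        intro q hq
        obtain ⟨S, hS, rfl⟩ := mem_image.mp hq
        obtain ⟨hSeq, h1, h2, h3, hlt1, hlt2⟩ := hg S (hAsS S hS)
        simp only [Ufin, hsw, mem_biUnion, mem_image, mem_erase, SimpleGraph.mem_neighborFinset]
        exact ⟨(g S).1, mem_univ _, (g S).2.1, h1, (g S).2.2.2,
          ⟨(lt_trans hlt1 hlt2).ne', h3⟩, ⟨(g S).2.2.1, ⟨hlt2.ne, hlt1.ne', h2⟩, rfl⟩⟩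
      have hinj1 : Set.InjOn g As := by
        intro S hS S' hS' heq
        have e1 := (hg S (hAsS S hS)).1
        have e2 := (hg S' (hAsS S' hS')).1
        rw [e1, e2, heq]
      have hinj2 : Set.InjOn (fun S => sw (g S)) As := by
        intro S hS S' hS' heq
        apply hinj1 hS hS'
        have : ∀ q q' : V × V × V × V, sw q = sw q' → q = q' := by
          intro q q' h
          obtain ⟨a, b, c, e⟩ := q
          obtain ⟨a', b', c', e'⟩ := q'
          simp only [hsw, Prod.mk.injEq] at h ⊢
          tauto
        exact this _ _ heq
      have hdisj : Disjoint (As.image g) (As.image (fun S => sw (g S))) := by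
        rw [Finset.disjoint_left]
        intro q hq1 hq2
        obtain ⟨S, hS, rfl⟩ := mem_image.mp hq1
        obtain ⟨S', hS', heq⟩ := mem_image.mp hq2
        have l1 : (g S).2.2.1 < (g S).2.2.2 := (hg S (hAsS S hS)).2.2.2.2.2
        have l2 : (g S').2.2.1 < (g S').2.2.2 := (hg S' (hAsS S' hS')).2.2.2.2.2
        rw [hsw] at heq
        have e3 : (g S').2.2.2 = (g S).2.2.1 := congrArg (fun q => q.2.2.1) heq
        have e4 : (g S').2.2.1 = (g S).2.2.2 := congrArg (fun q => q.2.2.2) heq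
        rw [e3, e4] at l2
        exact absurd l1 (not_lt.mpr l2.le)
      calc 2 * As.card = (As.image g).card + (As.image (fun S => sw (g S))).card := by
            rw [card_image_of_injOn hinj1, card_image_of_injOn hinj2]; ring
        _ = ((As.image g) ∪ (As.image (fun S => sw (g S)))).card :=
            (card_union_of_disjoint hdisj).symm
        _ ≤ (Ufin G).card := card_le_card (union_subset hsub1 hsub2)
    -- combine
    have hw := Wfin_card G hdeg
    have hu := Ufin_card G hdeg
    have e1 : Fintype.card V * (d * ((d - 1) * (d - 1))) ≤ Fintype.card V * d ^ 3 := by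
      apply Nat.mul_le_mul_left
      calc d * ((d-1)*(d-1)) ≤ d * (d * d) :=
            Nat.mul_le_mul_left _ (Nat.mul_le_mul (Nat.sub_le d 1) (Nat.sub_le d 1))
        _ = d ^ 3 := by ring
    have e2 : Fintype.card V * (d * ((d - 1) * (d - 2))) ≤ Fintype.card V * d ^ 3 := by
      apply Nat.mul_le_mul_left
      calc d * ((d-1)*(d-2)) ≤ d * (d * d) :=
            Nat.mul_le_mul_left _ (Nat.mul_le_mul (Nat.sub_le d 1) (Nat.sub_le d 2))
        _ = d ^ 3 := by ring
    have hfin : 2 * A.card ≤ 2 * (Fintype.card V * d ^ 3) := by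
      have b1 : 2 * Ap.card ≤ Fintype.card V * d ^ 3 := le_trans hpath (le_trans hw e1)
      have b2 : 2 * As.card ≤ Fintype.card V * d ^ 3 := le_trans hstar (le_trans hu e2)
      omega
    omega
end

section
/- Let A be a real m×m matrix, λ ≥ 0, κ > 0, and let β, β̂ ∈ ℝᵐ. Let T = {j : β_j ≠ 0} and s = Card(T) ≥ 1. Assume: (i) ‖A(β̂ − β)‖_∞ ≤ 2λ; (ii) ‖β̂‖₁ ≤ ‖β‖₁; and (iii) (restricted eigenvalue) for every h ∈ ℝᵐ with ‖h_{T^c}‖₁ ≤ ‖h_T‖₁ one has hᵀ A h ≥ κ² ‖h‖₂². Then (β̂ − β)ᵀ A (β̂ − β) ≤ 16 λ² s / κ² and ‖β̂ − β‖₁ ≤ 8 λ s / κ². -/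
open Matrix Finset

/-!
With `h = β̂ - β`, the ℓ₁ condition `‖β̂‖₁ ≤ ‖β‖₁` and the triangle inequality on the support
`T` of `β` put `h` in the cone `‖h_{Tᶜ}‖₁ ≤ ‖h_T‖₁`, so that `‖h‖₁ ≤ 2 ‖h_T‖₁` and the restricted
eigenvalue condition applies to `h`. Writing `t = ‖h_T‖₁`, Cauchy–Schwarz on `T`, the restricted
eigenvalue condition and Hölder's inequality give
`κ² t² ≤ s κ² ‖h‖₂² ≤ s hᵀAh ≤ 2λ s ‖h‖₁ ≤ 4λ s t`, hence `t ≤ 4λs/κ²`; both bounds follow from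
`‖h‖₁ ≤ 2t` and `hᵀAh ≤ 2λ ‖h‖₁`.
-/

variable {ι : Type*} [Fintype ι]

theorem dotProduct_le_mul_sum_abs {h v : ι → ℝ} {c : ℝ} (hv : ∀ i, |v i| ≤ c) :
    h ⬝ᵥ v ≤ c * ∑ j, |h j| := by
  rw [dotProduct, mul_sum]
  refine sum_le_sum fun j _ => ?_
  calc h j * v j ≤ |h j| * |v j| := (le_abs_self _).trans (abs_mul _ _).le
    _ ≤ |h j| * c := mul_le_mul_of_nonneg_left (hv j) (abs_nonneg _)
    _ = c * |h j| := mul_comm _ _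

theorem sq_sum_abs_le_card_mul_sum_sq (T : Finset ι) (h : ι → ℝ) :
    (∑ j ∈ T, |h j|) ^ 2 ≤ #T * ∑ j, h j ^ 2 :=
  calc (∑ j ∈ T, |h j|) ^ 2 ≤ #T * ∑ j ∈ T, |h j| ^ 2 := sq_sum_le_card_mul_sum_sq
    _ = #T * ∑ j ∈ T, h j ^ 2 := by simp only [sq_abs]
    _ ≤ #T * ∑ j, h j ^ 2 := by
      gcongr _ * ?_
      exact sum_le_univ_sum_of_nonneg fun j => sq_nonneg (h j)

variable [DecidableEq ι]

theorem sum_compl_abs_sub_le_sum_abs_sub (T : Finset ι) {β β' : ι → ℝ}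
    (hβ : ∀ j ∉ T, β j = 0) (hnorm : ∑ j, |β' j| ≤ ∑ j, |β j|) :
    ∑ j ∈ Tᶜ, |β' j - β j| ≤ ∑ j ∈ T, |β' j - β j| := by
  have hcompl : ∑ j ∈ Tᶜ, |β' j - β j| = ∑ j ∈ Tᶜ, |β' j| :=
    sum_congr rfl fun j hj => by rw [hβ j (mem_compl.mp hj), sub_zero]
  have hβT : ∑ j ∈ T, |β j| = ∑ j, |β j| := by
    refine sum_subset (subset_univ T) fun j _ hj => ?_
    rw [hβ j hj, abs_zero]
  have htriangle : ∑ j ∈ T, |β j| ≤ ∑ j ∈ T, |β' j| + ∑ j ∈ T, |β' j - β j| := by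
    rw [← sum_add_distrib]
    exact sum_le_sum fun j _ => by
      linarith [abs_sub_abs_le_abs_sub (β j) (β' j), abs_sub_comm (β j) (β' j)]
  have hsplit := sum_add_sum_compl T fun j => |β' j|
  linarith

theorem sum_abs_le_two_mul_of_sum_compl_le {T : Finset ι} {h : ι → ℝ}
    (hcone : ∑ j ∈ Tᶜ, |h j| ≤ ∑ j ∈ T, |h j|) :
    ∑ j, |h j| ≤ 2 * ∑ j ∈ T, |h j| := by
  rw [← sum_add_sum_compl T]
  linarith

theorem le_of_sq_le_mul {x a : ℝ} (ha : 0 ≤ a) (hx : x ^ 2 ≤ a * x) : x ≤ a := by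
  nlinarith

theorem sum_abs_le_of_restrictedEigenvalue {A : Matrix ι ι ℝ} {T : Finset ι} {h : ι → ℝ}
    {lam κ : ℝ} (hlam : 0 ≤ lam) (hκ : 0 < κ) (hAh : ∀ i, |(A *ᵥ h) i| ≤ 2 * lam)
    (hcone : ∑ j ∈ Tᶜ, |h j| ≤ ∑ j ∈ T, |h j|) (hRE : κ ^ 2 * ∑ j, h j ^ 2 ≤ h ⬝ᵥ A *ᵥ h) :
    ∑ j ∈ T, |h j| ≤ 4 * lam * #T / κ ^ 2 := by
  have hκ2 : 0 < κ ^ 2 := by positivity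
  refine le_of_sq_le_mul (by positivity) ?_
  rw [div_mul_eq_mul_div, le_div_iff₀ hκ2]
  calc (∑ j ∈ T, |h j|) ^ 2 * κ ^ 2 ≤ (#T * ∑ j, h j ^ 2) * κ ^ 2 := by
        gcongr
        exact sq_sum_abs_le_card_mul_sum_sq T h
    _ = #T * (κ ^ 2 * ∑ j, h j ^ 2) := by ring
    _ ≤ #T * (h ⬝ᵥ A *ᵥ h) := by gcongr
    _ ≤ #T * (2 * lam * ∑ j, |h j|) := by gcongr; exact dotProduct_le_mul_sum_abs hAh
    _ ≤ #T * (2 * lam * (2 * ∑ j ∈ T, |h j|)) := by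
        gcongr
        exact sum_abs_le_two_mul_of_sum_compl_le hcone
    _ = 4 * lam * #T * ∑ j ∈ T, |h j| := by ring

theorem stmt_16_general {m : ℕ} (A : Matrix (Fin m) (Fin m) ℝ) (lam κ : ℝ)
    (hlam : 0 ≤ lam) (hκ : 0 < κ) (β βhat : Fin m → ℝ)
    (T : Finset (Fin m)) (hT : T = Finset.univ.filter (fun j => β j ≠ 0))
    (s : ℕ) (hs : s = T.card)
    (h1 : ∀ i, |A.mulVec (βhat - β) i| ≤ 2 * lam)
    (h2 : ∑ j, |βhat j| ≤ ∑ j, |β j|)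
    (hRE : ∀ h : Fin m → ℝ, ∑ j ∈ Tᶜ, |h j| ≤ ∑ j ∈ T, |h j| →
      κ ^ 2 * ∑ j, h j ^ 2 ≤ h ⬝ᵥ A.mulVec h) :
    (βhat - β) ⬝ᵥ A.mulVec (βhat - β) ≤ 16 * lam ^ 2 * s / κ ^ 2 ∧
      ∑ j, |βhat j - β j| ≤ 8 * lam * s / κ ^ 2 := by
  set h := βhat - β
  have hsupp : ∀ j ∉ T, β j = 0 := fun j hj => by simpa [hT] using hj
  have hcone : ∑ j ∈ Tᶜ, |h j| ≤ ∑ j ∈ T, |h j| :=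
    sum_compl_abs_sub_le_sum_abs_sub T hsupp h2
  have hT_bound : ∑ j ∈ T, |h j| ≤ 4 * lam * s / κ ^ 2 :=
    hs ▸ sum_abs_le_of_restrictedEigenvalue hlam hκ h1 hcone (hRE h hcone)
  have hL1_bound : ∑ j, |h j| ≤ 8 * lam * s / κ ^ 2 :=
    calc ∑ j, |h j| ≤ 2 * (4 * lam * s / κ ^ 2) :=
          (sum_abs_le_two_mul_of_sum_compl_le hcone).trans (by gcongr)
      _ = 8 * lam * s / κ ^ 2 := by ring
  refine ⟨?_, hL1_bound⟩
  calc h ⬝ᵥ A *ᵥ h ≤ 2 * lam * ∑ j, |h j| := dotProduct_le_mul_sum_abs h1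
    _ ≤ 2 * lam * (8 * lam * s / κ ^ 2) := by gcongr
    _ = 16 * lam ^ 2 * s / κ ^ 2 := by ring

/-- Let `A` be a real `m × m` matrix, `λ ≥ 0`, `κ > 0`, and let
`β, β̂ ∈ ℝᵐ`.  Let `T = {j : β_j ≠ 0}` and `s = Card(T) ≥ 1`.  Assume:
(i) `‖A(β̂ − β)‖_∞ ≤ 2λ`; (ii) `‖β̂‖₁ ≤ ‖β‖₁`; and (iii) (restricted eigenvalue) for every
`h` with `‖h_{T^c}‖₁ ≤ ‖h_T‖₁` one has `hᵀ A h ≥ κ² ‖h‖₂²`.  Then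
`(β̂ − β)ᵀ A (β̂ − β) ≤ 16 λ² s / κ²` and `‖β̂ − β‖₁ ≤ 8 λ s / κ²`. -/
theorem stmt_16 {m : ℕ} (A : Matrix (Fin m) (Fin m) ℝ) (lam κ : ℝ)
    (hlam : 0 ≤ lam) (hκ : 0 < κ) (β βhat : Fin m → ℝ)
    (T : Finset (Fin m)) (hT : T = Finset.univ.filter (fun j => β j ≠ 0))
    (s : ℕ) (hs : s = T.card) (hs1 : 1 ≤ s)
    (h1 : ∀ i, |A.mulVec (βhat - β) i| ≤ 2 * lam)
    (h2 : ∑ j, |βhat j| ≤ ∑ j, |β j|)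
    (hRE : ∀ h : Fin m → ℝ, ∑ j ∈ Tᶜ, |h j| ≤ ∑ j ∈ T, |h j| →
      κ ^ 2 * ∑ j, h j ^ 2 ≤ h ⬝ᵥ A.mulVec h) :
    (βhat - β) ⬝ᵥ A.mulVec (βhat - β) ≤ 16 * lam ^ 2 * s / κ ^ 2 ∧
      ∑ j, |βhat j - β j| ≤ 8 * lam * s / κ ^ 2 :=
  stmt_16_general A lam κ hlam hκ β βhat T hT s hs h1 h2 hRE
end

section
/- Let X be a real n×m matrix, y ∈ ℝⁿ, λ > 0 and c > 1. Let β ∈ ℝᵐ with support T = {j : β_j ≠ 0}, and suppose β̂ ∈ ℝᵐ satisfies Q(β̂) ≤ Q(β), where Q(b) = (1/(2n)) ‖y − X b‖₂² + λ ‖b‖₁. If moreover (1/n)‖Xᵀ(y − Xβ)‖_∞ ≤ λ/c, then h := β̂ − β satisfies the cone condition ‖h_{T^c}‖₁ ≤ ((c+1)/(c−1)) ‖h_T‖₁. -/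
open Matrix Finset

set_option maxHeartbeats 2000000 in
/-- Let `X` be a real `n × m` matrix, `y ∈ ℝⁿ`, `λ > 0` and `c > 1`.  Let
`β ∈ ℝᵐ` with support `T = {j : β_j ≠ 0}`, and suppose `β̂` satisfies `Q(β̂) ≤ Q(β)` where
`Q(b) = (1/(2n)) ‖y − Xb‖₂² + λ‖b‖₁`.  If moreover `(1/n)‖Xᵀ(y − Xβ)‖_∞ ≤ λ/c`, then
`h := β̂ − β` satisfies the cone condition `‖h_{T^c}‖₁ ≤ ((c+1)/(c−1)) ‖h_T‖₁`. -/
theorem stmt_17 {n m : ℕ} (X : Matrix (Fin n) (Fin m) ℝ) (y : Fin n → ℝ)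
    (lam c : ℝ) (hlam : 0 < lam) (hc : 1 < c) (β βhat : Fin m → ℝ)
    (T : Finset (Fin m)) (hT : T = Finset.univ.filter (fun j => β j ≠ 0))
    (Q : (Fin m → ℝ) → ℝ)
    (hQ : Q = fun b => (1 / (2 * (n : ℝ))) * ∑ i, (y i - X.mulVec b i) ^ 2
      + lam * ∑ j, |b j|)
    (hmin : Q βhat ≤ Q β)
    (hgrad : ∀ j, |Xᵀ.mulVec (y - X.mulVec β) j| / (n : ℝ) ≤ lam / c) :
    ∑ j ∈ Tᶜ, |βhat j - β j| ≤ ((c + 1) / (c - 1)) * ∑ j ∈ T, |βhat j - β j| := by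
  subst hQ hT
  simp only at hmin
  -- notation
  have hc0 : (0:ℝ) < c := lt_trans one_pos hc
  set r : Fin n → ℝ := fun i => y i - X.mulVec β i with hr
  set hv : Fin m → ℝ := fun j => βhat j - β j with hhv
  have hveq : hv = βhat - β := rfl
  set s : Fin n → ℝ := X.mulVec hv with hs
  have hsi : ∀ i, y i - X.mulVec βhat i = r i - s i := by
    intro i
    have h1 : s i = X.mulVec βhat i - X.mulVec β i := by
      rw [hs, hveq, Matrix.mulVec_sub]; rfl
    simp only [hr, h1]; ring
  set S1 : ℝ := ∑ i, r i * s i with hS1def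
  have expand : ∑ i, (y i - X.mulVec βhat i)^2
      = (∑ i, r i ^ 2 - 2 * S1) + ∑ i, s i ^ 2 := by
    have e1 : ∀ i ∈ Finset.univ, (y i - X.mulVec βhat i)^2
        = (r i ^ 2 - 2 * (r i * s i)) + s i ^ 2 := by
      intro i _; rw [hsi i]; ring
    rw [Finset.sum_congr rfl e1, Finset.sum_add_distrib, Finset.sum_sub_distrib,
      ← Finset.mul_sum, hS1def]
  have hrsum : ∑ i, (y i - X.mulVec β i)^2 = ∑ i, r i ^ 2 := rfl
  have hq2 : 2 * (1 / (2 * (n:ℝ))) = 1 / (n:ℝ) := by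
    rcases eq_or_ne (n:ℝ) 0 with h | h
    · simp [h]
    · field_simp
  have hq0 : (0:ℝ) ≤ 1 / (2 * (n:ℝ)) := by positivity
  have hs2 : (0:ℝ) ≤ ∑ i, s i ^ 2 := by positivity
  have key1 : lam * ∑ j, |βhat j| ≤ lam * ∑ j, |β j| + (1/(n:ℝ)) * S1 := by
    rw [expand, hrsum] at hmin
    have hrw : 1 / (2 * (n:ℝ)) * (∑ i, r i ^ 2 - 2 * S1 + ∑ i, s i ^ 2)
        = 1 / (2 * (n:ℝ)) * ∑ i, r i ^ 2 - (1/(n:ℝ)) * S1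
          + 1 / (2 * (n:ℝ)) * ∑ i, s i ^ 2 := by
      rw [← hq2]; ring
    rw [hrw] at hmin
    have := mul_nonneg hq0 hs2
    linarith
  -- rewrite S1 via transpose
  have hS1 : S1 = ∑ j, (Xᵀ.mulVec r) j * hv j := by
    rw [hS1def]
    have e1 : ∀ i ∈ Finset.univ, r i * s i = ∑ j, r i * (X i j * hv j) := by
      intro i _
      rw [hs]
      simp only [Matrix.mulVec, dotProduct, Finset.mul_sum]
    have e2 : ∀ j ∈ Finset.univ, (Xᵀ.mulVec r) j * hv j
        = ∑ i, r i * (X i j * hv j) := by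
      intro j _
      simp only [Matrix.mulVec, dotProduct, Matrix.transpose_apply,
        Finset.sum_mul]
      apply Finset.sum_congr rfl; intro i _; ring
    rw [Finset.sum_congr rfl e1, Finset.sum_congr rfl e2, Finset.sum_comm]
  have hgr : ∀ j, |Xᵀ.mulVec r j| / (n:ℝ) ≤ lam / c := hgrad
  have key2 : (1/(n:ℝ)) * S1 ≤ (lam / c) * ∑ j, |hv j| := by
    rw [hS1, Finset.mul_sum, Finset.mul_sum]
    apply Finset.sum_le_sum
    intro j _
    have h1n : (0:ℝ) ≤ 1 / (n:ℝ) := by positivity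
    calc 1/(n:ℝ) * (Xᵀ.mulVec r j * hv j)
        ≤ 1/(n:ℝ) * (|Xᵀ.mulVec r j| * |hv j|) := by
          apply mul_le_mul_of_nonneg_left _ h1n
          rw [← abs_mul]; exact le_abs_self _
      _ = (|Xᵀ.mulVec r j| / (n:ℝ)) * |hv j| := by ring
      _ ≤ (lam / c) * |hv j| :=
          mul_le_mul_of_nonneg_right (hgr j) (abs_nonneg _)
  -- split L1 norms
  set T := Finset.univ.filter (fun j => β j ≠ 0) with hT
  have hβc : ∀ j ∈ Tᶜ, β j = 0 := by
    intro j hj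
    simpa [hT, Finset.mem_compl, Finset.mem_filter] using hj
  have hsplit : ∀ f : Fin m → ℝ, ∑ j, f j = ∑ j ∈ T, f j + ∑ j ∈ Tᶜ, f j := by
    intro f; rw [Finset.sum_add_sum_compl]
  set A : ℝ := ∑ j ∈ T, |hv j| with hA
  set B : ℝ := ∑ j ∈ Tᶜ, |hv j| with hB
  have hA0 : 0 ≤ A := Finset.sum_nonneg fun j _ => abs_nonneg _
  have hB0 : 0 ≤ B := Finset.sum_nonneg fun j _ => abs_nonneg _
  have hBhatc : ∑ j ∈ Tᶜ, |βhat j| = B := by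
    rw [hB]; apply Finset.sum_congr rfl
    intro j hj; rw [hhv]; simp [hβc j hj]
  have hβcz : ∑ j ∈ Tᶜ, |β j| = 0 := by
    apply Finset.sum_eq_zero; intro j hj; simp [hβc j hj]
  have hTtri : ∑ j ∈ T, |β j| - A ≤ ∑ j ∈ T, |βhat j| := by
    rw [hA, ← Finset.sum_sub_distrib]
    apply Finset.sum_le_sum
    intro j _
    have : |β j| ≤ |βhat j| + |hv j| := by
      rw [hhv]
      calc |β j| = |βhat j - (βhat j - β j)| := by ring_nf
        _ ≤ |βhat j| + |βhat j - β j| := abs_sub _ _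
    linarith
  -- combine
  have main : lam * (B - A) ≤ (lam / c) * (A + B) := by
    have e1 : ∑ j, |βhat j| = ∑ j ∈ T, |βhat j| + B := by rw [hsplit, hBhatc]
    have e2 : ∑ j, |β j| = ∑ j ∈ T, |β j| := by rw [hsplit, hβcz, add_zero]
    have e3 : ∑ j, |hv j| = A + B := by rw [hsplit, hA, hB]
    rw [e1, e2] at key1
    rw [e3] at key2
    nlinarith [key1, key2, hTtri, hlam]
  -- final arithmetic
  have hc1 : (0:ℝ) < c - 1 := by linarith
  have : (c - 1) * B ≤ (c + 1) * A := by
    have h2 : c * (lam * (B - A)) ≤ c * ((lam / c) * (A + B)) :=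
      mul_le_mul_of_nonneg_left main (le_of_lt hc0)
    have h3 : c * ((lam / c) * (A + B)) = lam * (A + B) := by
      field_simp
    nlinarith [h2, h3, hlam]
  show B ≤ (c + 1) / (c - 1) * A
  rw [div_mul_eq_mul_div, le_div_iff₀ hc1]
  nlinarith [this]
end
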